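/- (Main theorem, converse direction for the 3-cycle) There exist a Hilbert space H and three pairwise commuting contractions A₁, A₂, A₃ on H such that no Hilbert space K ⊇ H admits unitaries U₁, U₂, U₃ ∈ B(K) that pairwise commute and dilate A₁, A₂, A₃ (i.e., P U_{j₁}⋯U_{j_k}|_H = A_{j₁}⋯A_{j_k} for all words, or even just each Uⱼ dilating Aⱼ with pairwise commutation). -/

import Mathlib

open ContinuousLinearMap

/-- A triple of pairwise commuting unitaries on some Hilbert space `K ⊇ H`, each
dilating the corresponding operator `Aⱼ` in the power sense
(`P Uⱼⁿ |_H = Aⱼⁿ` for all `n`, expressed by inner products). -/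
structure TripleUnitaryDilation {H : Type}
    [NormedAddCommGroup H] [InnerProductSpace ℂ H] [CompleteSpace H]
    (A : Fin 3 → H →L[ℂ] H) where
  K : Type
  [grp : NormedAddCommGroup K]
  [ips : InnerProductSpace ℂ K]
  [cpl : CompleteSpace K]
  emb : H →ₗᵢ[ℂ] K
  U : Fin 3 → K →L[ℂ] K
  unitary_right : ∀ j, U j ∘L ContinuousLinearMap.adjoint (U j) = 1
  unitary_left : ∀ j, ContinuousLinearMap.adjoint (U j) ∘L U j = 1
  commute : ∀ i j, U i ∘L U j = U j ∘L U i
  dilation : ∀ (j) (n : ℕ) (x y : H),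
    (inner ℂ (((U j) ^ n) (emb x)) (emb y) : ℂ) = (inner ℂ (((A j) ^ n) x) y : ℂ)

/-- A counterexample to Andô's theorem for triples: a Hilbert space `H` and three
pairwise commuting contractions `A₁, A₂, A₃` on `H` admitting no triple of pairwise
commuting unitaries on any Hilbert space `K ⊇ H` that dilates them (even in the weak
sense that each `Uⱼ` dilates `Aⱼ`). -/
structure ParrottCounterexample where
  H : Type
  [grp : NormedAddCommGroup H]
  [ips : InnerProductSpace ℂ H]
  [cpl : CompleteSpace H]
  A : Fin 3 → H →L[ℂ] H
  contraction : ∀ j, ‖A j‖ ≤ 1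
  commute : ∀ i j, A i ∘L A j = A j ∘L A i
  no_dilation : ¬ Nonempty (TripleUnitaryDilation A)


/-! With `B = (σ_x, 1, σ_z)`, let `Aⱼ = [[0, 0], [Bⱼ, 0]]` on `E ⊕ E`. Every product of two
`Aⱼ` vanishes, so the `Aⱼ` are commuting contractions. If unitaries `Uⱼ` dilate them, then,
because `Aⱼ` is isometric on `E ⊕ 0`, the contraction `Uⱼ` must agree with `Aⱼ` there:
`Uⱼ (x, 0) = (0, Bⱼ x)`. Since `B₁ = 1` this gives `U₁² (Bᵢ Bⱼ x, 0) = Uᵢ Uⱼ (x, 0)`, so the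
commutation of the `Uⱼ` and the injectivity of `U₁` force `Bᵢ Bⱼ = Bⱼ Bᵢ`, which fails for
the anticommuting Pauli matrices `σ_x, σ_z`. -/

open WithLp
open scoped InnerProductSpace

section LowerOffDiag

variable {𝕜 E : Type*} [RCLike 𝕜] [NormedAddCommGroup E] [InnerProductSpace 𝕜 E]

noncomputable def lowerOffDiag (B : E →L[𝕜] E) : WithLp 2 (E × E) →L[𝕜] WithLp 2 (E × E) :=
  (prodContinuousLinearEquiv 2 𝕜 E E).symm.toContinuousLinearMap ∘L inr 𝕜 E E ∘L B ∘L
    fstL 2 𝕜 E E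

@[simp]
lemma lowerOffDiag_apply (B : E →L[𝕜] E) (x : WithLp 2 (E × E)) :
    lowerOffDiag B x = toLp 2 (0, B x.fst) := rfl

lemma lowerOffDiag_comp_lowerOffDiag (B C : E →L[𝕜] E) :
    lowerOffDiag B ∘L lowerOffDiag C = 0 := by
  ext x; simp

lemma norm_lowerOffDiag_le (B : E →L[𝕜] E) : ‖lowerOffDiag B‖ ≤ ‖B‖ :=
  opNorm_le_bound _ (norm_nonneg B) fun x => by
    simpa using (B.le_opNorm _).trans (by gcongr; exact WithLp.norm_fst_le (x := x))

end LowerOffDiag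

lemma apply_emb_eq_of_norm_apply_eq {𝕜 H K : Type*} [RCLike 𝕜]
    [NormedAddCommGroup H] [InnerProductSpace 𝕜 H] [NormedAddCommGroup K] [InnerProductSpace 𝕜 K]
    (e : H →ₗᵢ[𝕜] K) (U : K →L[𝕜] K) (A : H →L[𝕜] H) (hU : ∀ z, ‖U z‖ ≤ ‖z‖)
    (hUA : ∀ x y, ⟪U (e x), e y⟫_𝕜 = ⟪A x, y⟫_𝕜) {u : H} (hu : ‖A u‖ = ‖u‖) :
    U (e u) = e (A u) := by
  have hre : RCLike.re ⟪U (e u), e (A u)⟫_𝕜 = ‖A u‖ ^ 2 := by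
    rw [hUA, inner_self_eq_norm_sq]
  have hnorm : ‖U (e u)‖ ≤ ‖A u‖ := by
    simpa [hu] using hU (e u)
  have hsq : ‖U (e u) - e (A u)‖ ^ 2 ≤ 0 := by
    rw [@norm_sub_sq 𝕜, hre, e.norm_map]
    nlinarith [norm_nonneg (U (e u))]
  simpa [sub_eq_zero] using hsq

theorem commute_of_tripleUnitaryDilation {E : Type} [NormedAddCommGroup E]
    [InnerProductSpace ℂ E] [CompleteSpace E] (B : Fin 3 → E →L[ℂ] E)
    (hB : ∀ j x, ‖B j x‖ = ‖x‖) (hB₁ : B 1 = 1)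
    (D : TripleUnitaryDilation fun j => lowerOffDiag (B j)) (i j : Fin 3) :
    B i ∘L B j = B j ∘L B i := by
  obtain ⟨K, e, U, -, hU, hUU, hd⟩ := D
  have hUnorm : ∀ k z, ‖U k z‖ = ‖z‖ := fun k => (U k).norm_map_iff_adjoint_comp_self.mpr (hU k)
  have hUe : ∀ k x, U k (e (toLp 2 (x, 0))) = e (toLp 2 (0, B k x)) := fun k x =>
    apply_emb_eq_of_norm_apply_eq e (U k) (lowerOffDiag (B k)) (fun z => (hUnorm k z).le)
      (by simpa only [pow_one] using hd k 1) (by simpa using hB k x)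
  have hU₁e : ∀ x, U 1 (e (toLp 2 (x, 0))) = e (toLp 2 (0, x)) := by simpa [hB₁] using hUe 1
  have hU₁sq : ∀ k l x,
      U 1 (U 1 (e (toLp 2 (B k (B l x), 0)))) = U k (U l (e (toLp 2 (x, 0)))) := by
    intro k l x
    rw [hU₁e, ← hUe, ← comp_apply, hUU, comp_apply, hU₁e, hUe]
  have hU₁inj : Function.Injective (U 1) :=
    (LinearIsometry.mk (U 1 : K →ₗ[ℂ] K) (hUnorm 1)).injective
  ext x
  have h : U 1 (U 1 (e (toLp 2 (B i (B j x), 0)))) =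
      U 1 (U 1 (e (toLp 2 (B j (B i x), 0)))) := by
    rw [hU₁sq, hU₁sq, ← comp_apply (U i), hUU, comp_apply]
  simpa using e.injective (hU₁inj (hU₁inj h))

noncomputable def pauliX : EuclideanSpace ℂ (Fin 2) →L[ℂ] EuclideanSpace ℂ (Fin 2) :=
  Matrix.toEuclideanCLM (n := Fin 2) (𝕜 := ℂ) !![0, 1; 1, 0]

noncomputable def pauliZ : EuclideanSpace ℂ (Fin 2) →L[ℂ] EuclideanSpace ℂ (Fin 2) :=
  Matrix.toEuclideanCLM (n := Fin 2) (𝕜 := ℂ) !![1, 0; 0, -1]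

lemma norm_pauliX_apply (x : EuclideanSpace ℂ (Fin 2)) : ‖pauliX x‖ = ‖x‖ := by
  simp [pauliX, EuclideanSpace.norm_eq, Fin.sum_univ_two, Matrix.mulVec, dotProduct, add_comm]

lemma norm_pauliZ_apply (x : EuclideanSpace ℂ (Fin 2)) : ‖pauliZ x‖ = ‖x‖ := by
  simp [pauliZ, EuclideanSpace.norm_eq, Fin.sum_univ_two, Matrix.mulVec, dotProduct]

lemma pauliX_comp_pauliZ_ne : pauliX ∘L pauliZ ≠ pauliZ ∘L pauliX := by
  intro h
  have := congr(($h) (EuclideanSpace.single 0 1) 1)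
  norm_num [pauliX, pauliZ, Matrix.mulVec, dotProduct, Fin.sum_univ_two] at this

/-- Main theorem, converse direction for the 3-cycle: there exist a Hilbert space `H`
and three pairwise commuting contractions on `H` with no pairwise commuting unitary
dilation on any larger Hilbert space. -/
theorem parrott_counterexample_exists : Nonempty ParrottCounterexample := by
  let B : Fin 3 → EuclideanSpace ℂ (Fin 2) →L[ℂ] EuclideanSpace ℂ (Fin 2) := ![pauliX, 1, pauliZ]
  have hB : ∀ j x, ‖B j x‖ = ‖x‖ := by
    intro j x
    fin_cases j
    exacts [norm_pauliX_apply x, rfl, norm_pauliZ_apply x]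
  refine ⟨⟨WithLp 2 (_ × _), fun j => lowerOffDiag (B j), fun j => ?_, fun i j => ?_, ?_⟩⟩
  · exact (norm_lowerOffDiag_le _).trans
      (opNorm_le_bound _ zero_le_one fun x => by rw [hB, one_mul])
  · simp only [lowerOffDiag_comp_lowerOffDiag]
  · rintro ⟨D⟩
    exact pauliX_comp_pauliZ_ne (commute_of_tripleUnitaryDilation B hB rfl D 0 2)
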